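/- arXiv:2005.11375 — 2 statements merged into one kernel-verified Lean document; each statement's English description precedes it below -/
import Mathlib

section
/- Let t > d/2, q ∈ ℕ, and let u† be a mean-zero function on 𝕋^d with Fourier coefficients û satisfying Σ_{m≠0} |m|^{2t}|û(m)|² < ∞. Let u(·,t,q) be the minimizer of the H^t-norm ‖v‖_t over all v in the span of {(−Δ)^{-t}δ(·−x_j)}_{j∈J_q} subject to the interpolation constraints [u† − v, δ(·−x_j)] = 0 for all j ∈ J_q. Then the Fourier coefficients of u(·,t,q) are given by û(m,t,q) = 0 for m = 0 and û(m,t,q) = |m|^{-2t} (T_q û)(m) / M_q^t(m) for m ≠ 0, where (T_q û)(m) = Σ_{β∈ℤ^d} û(m + 2^q β) and M_q^t is as defined above. -/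
open scoped BigOperators

/-- Euclidean norm of a lattice point `m ∈ ℤ^d`. -/
noncomputable def enormZ {d : ℕ} (m : Fin d → ℤ) : ℝ :=
  Real.sqrt (∑ i, ((m i : ℝ))^2)

/-- `M_q^t(m) = Σ_{β ∈ ℤ^d} |m + 2^q β|^{-2t}`; terms with `m + 2^q β = 0` vanish
since `0^{-2t} = 0` for the real power with `-2t ≠ 0`, which encodes the omission
of the `β`-term producing `0` in the definition from the paper. -/
noncomputable def Mq (d q : ℕ) (t : ℝ) (m : Fin d → ℤ) : ℝ :=
  ∑' β : Fin d → ℤ, enormZ (fun i => m i + 2^q * β i) ^ (-(2*t))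

/-- The box `B_q^d = [-2^{q-1}, 2^{q-1}-1]^d ⊂ ℤ^d`. -/
noncomputable def Bqset (d q : ℕ) : Finset (Fin d → ℤ) :=
  Fintype.piFinset (fun _ => Finset.Icc (-(2:ℤ)^(q-1)) ((2:ℤ)^(q-1) - 1))
/-- The `2^q`-periodization operator on Fourier coefficients. -/
noncomputable def Tq {d : ℕ} (q : ℕ) (uhat : (Fin d → ℤ) → ℂ) (m : Fin d → ℤ) : ℂ :=
  ∑' β : Fin d → ℤ, uhat (fun i => m i + 2^q * β i)

/-- Squared Sobolev norm `‖v‖_t² = Σ_{m≠0} (4π²|m|²)^t |v̂(m)|²` (the `m = 0` term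
vanishes since `0^t = 0` for `t ≠ 0`). -/
noncomputable def HtNorm2 {d : ℕ} (t : ℝ) (vhat : (Fin d → ℤ) → ℂ) : ℝ :=
  ∑' m : Fin d → ℤ, (4 * Real.pi^2 * enormZ m ^ 2) ^ t * ‖vhat m‖^2

/-- Membership (in terms of Fourier coefficients) in the span of the functions
`(−Δ)^{-t} δ(· − x_j)`, `j ∈ J_q`. -/
def FhatMem (d q : ℕ) (t : ℝ) (vhat : (Fin d → ℤ) → ℂ) : Prop :=
  vhat 0 = 0 ∧ ∃ p : (Fin d → ℤ) → ℂ,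
    (∀ (m β : Fin d → ℤ), p (fun i => m i + 2^q * β i) = p m) ∧
    ∀ m : Fin d → ℤ, m ≠ 0 → vhat m = ((enormZ m ^ (-(2*t)) : ℝ) : ℂ) * p m

/-- The interpolation constraints `v(x_j) = u†(x_j)` for all lattice points
`x_j = j 2^{-q}`, expressed via Fourier series. -/
def Interpolates (d q : ℕ) (uhat vhat : (Fin d → ℤ) → ℂ) : Prop :=
  ∀ j : Fin d → Fin (2^q), ∑' m : Fin d → ℤ,
    (uhat m - vhat m) * Complex.exp (2 * Real.pi * Complex.I *
      ((∑ i, ((j i : ℝ) / 2^q) * (m i : ℝ) : ℝ) : ℂ)) = 0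


lemma enormZ_nonneg {d : ℕ} (m : Fin d → ℤ) : 0 ≤ enormZ m := Real.sqrt_nonneg _

lemma abs_coord_le_enormZ {d : ℕ} (m : Fin d → ℤ) (i : Fin d) : |(m i : ℝ)| ≤ enormZ m := by
  rw [← Real.sqrt_sq_eq_abs]
  exact Real.sqrt_le_sqrt (Finset.single_le_sum (f := fun i => ((m i:ℝ))^2)
    (fun j _ => sq_nonneg _) (Finset.mem_univ i))

lemma one_le_enormZ {d : ℕ} {m : Fin d → ℤ} (hm : m ≠ 0) : 1 ≤ enormZ m := by
  obtain ⟨i, hi⟩ : ∃ i, m i ≠ 0 := by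
    by_contra h; push_neg at h; exact hm (funext h)
  have h1 : (1:ℝ) ≤ |(m i : ℝ)| := by
    rw [← Int.cast_abs]; exact_mod_cast Int.one_le_abs hi
  exact h1.trans (abs_coord_le_enormZ m i)

lemma enormZ_pos {d : ℕ} {m : Fin d → ℤ} (hm : m ≠ 0) : 0 < enormZ m :=
  lt_of_lt_of_le one_pos (one_le_enormZ hm)

lemma sumZ {r : ℝ} (hr : 1 < r) : Summable (fun k : ℤ => (1 + |(k:ℝ)|) ^ (-r)) := by
  have hnat : Summable (fun n : ℕ => (1 + |((n:ℤ):ℝ)|) ^ (-r)) := by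
    apply Summable.of_norm_bounded_eventually_nat (g := fun n => (n:ℝ) ^ (-r))
      (Real.summable_nat_rpow.mpr (by linarith))
    filter_upwards [Filter.eventually_gt_atTop 0] with n hn
    have h0 : (0:ℝ) < n := by exact_mod_cast hn
    rw [Real.norm_of_nonneg (Real.rpow_nonneg (by positivity) _)]
    apply Real.rpow_le_rpow_of_nonpos h0 _ (by linarith)
    push_cast
    rw [abs_of_nonneg (by positivity)]
    linarith
  refine Summable.of_nat_of_neg hnat ?_
  refine hnat.congr fun n => ?_
  simp
lemma sumPi {r : ℝ} (hr : 1 < r) (d : ℕ) :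
    Summable (fun m : Fin d → ℤ => ∏ i, (1 + |((m i):ℝ)|) ^ (-r)) := by
  induction d with
  | zero => exact Summable.of_finite
  | succ n ih =>
    have h := (sumZ hr).mul_of_nonneg ih (fun k => Real.rpow_nonneg (by positivity) _)
      (fun m => Finset.prod_nonneg fun i _ => Real.rpow_nonneg (by positivity) _)
    have := h.comp_injective (i := (Fin.consEquiv (fun _ : Fin (n+1) => ℤ)).symm)
      (Equiv.injective _)
    refine this.congr fun m => ?_
    rw [Fin.prod_univ_succ]
    simp [Fin.consEquiv, Fin.tail]

lemma enormZ_zero {d : ℕ} : enormZ (0 : Fin d → ℤ) = 0 := by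
  simp [enormZ]

lemma summable_enormZ_rpow {d : ℕ} (hd : 1 ≤ d) {s : ℝ} (hs : (d:ℝ) < s) :
    Summable (fun m : Fin d → ℤ => enormZ m ^ (-s)) := by
  have hd0 : (0:ℝ) < d := by exact_mod_cast hd
  have hs0 : 0 < s := lt_trans hd0 hs
  set r : ℝ := s / d with hr
  have hr1 : 1 < r := (one_lt_div hd0).mpr hs
  have hsum : Summable (fun m : Fin d → ℤ => (2:ℝ) ^ s * ∏ i, (1 + |((m i):ℝ)|) ^ (-r)) :=
    (sumPi hr1 d).mul_left _
  refine Summable.of_nonneg_of_le (fun m => Real.rpow_nonneg (enormZ_nonneg m) _) ?_ hsum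
  intro m
  by_cases hm : m = 0
  · subst hm
    rw [enormZ_zero, Real.zero_rpow (by linarith)]
    positivity
  · have he1 : 1 ≤ enormZ m := one_le_enormZ hm
    have he0 : 0 < enormZ m := enormZ_pos hm
    have hprod_le : ∏ i, (1 + |((m i):ℝ)|) ≤ (2 * enormZ m) ^ d := by
      calc ∏ i, (1 + |((m i):ℝ)|) ≤ ∏ _i : Fin d, (2 * enormZ m) := by
            apply Finset.prod_le_prod (fun i _ => by positivity)
            intro i _
            have := abs_coord_le_enormZ m i
            linarith
        _ = (2 * enormZ m) ^ d := by rw [Finset.prod_const]; simp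
    have hprod_pos : 0 < ∏ i, (1 + |((m i):ℝ)|) :=
      Finset.prod_pos (fun i _ => by positivity)
    have hpr : (∏ i, (1 + |((m i):ℝ)|)) ^ (-r) = ∏ i, (1 + |((m i):ℝ)|) ^ (-r) :=
      (Real.finset_prod_rpow _ _ (fun i _ => by positivity) _).symm
    have key : ((2 * enormZ m) ^ d : ℝ) ^ (-r) ≤ ∏ i, (1 + |((m i):ℝ)|) ^ (-r) := by
      rw [← hpr]
      exact Real.rpow_le_rpow_of_nonpos hprod_pos hprod_le (by linarith)
    have heq : ((2 * enormZ m) ^ d : ℝ) ^ (-r) = 2 ^ (-s) * enormZ m ^ (-s) := by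
      rw [← Real.rpow_natCast (2 * enormZ m) d, ← Real.rpow_mul (by positivity)]
      have : (d:ℝ) * (-r) = -s := by
        rw [hr, mul_neg, mul_div_cancel₀ _ (ne_of_gt hd0)]
      rw [this, Real.mul_rpow (by norm_num) he0.le]
    rw [heq] at key
    have h2 : enormZ m ^ (-s) = 2 ^ s * (2 ^ (-s) * enormZ m ^ (-s)) := by
      rw [← mul_assoc, ← Real.rpow_add (by norm_num : (0:ℝ) < 2)]
      simp
    rw [h2]
    exact mul_le_mul_of_nonneg_left key (by positivity)

open Complex in
lemma char1 (q : ℕ) (r : ℤ) :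
    ∑ k : Fin (2^q), Complex.exp (2 * Real.pi * I * ((k:ℕ) * r / (2^q : ℕ))) =
      if ((2^q : ℤ) ∣ r) then ((2^q : ℕ) : ℂ) else 0 := by
  set N : ℕ := 2^q with hN
  have hN0 : (0:ℝ) < N := by positivity
  have hNc : ((N:ℂ)) ≠ 0 := by exact_mod_cast hN0.ne'
  set z : ℂ := Complex.exp (2 * Real.pi * I * (r / N)) with hz
  have hterm : ∀ k : Fin N, Complex.exp (2 * Real.pi * I * ((k:ℕ) * r / (N:ℕ))) = z ^ (k:ℕ) := by
    intro k
    rw [hz, ← Complex.exp_nat_mul]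
    ring_nf
  rw [Finset.sum_congr rfl (fun k _ => hterm k)]
  have hzN : z ^ N = 1 := by
    rw [hz, ← Complex.exp_nat_mul]
    have : (N:ℂ) * (2 * Real.pi * I * (r / N)) = (r:ℂ) * (2 * Real.pi * I) := by
      field_simp
    rw [this, Complex.exp_int_mul_two_pi_mul_I]
  by_cases hdvd : (2^q : ℤ) ∣ r
  · rw [if_pos hdvd]
    obtain ⟨s, hs⟩ := hdvd
    have hz1 : z = 1 := by
      rw [hz]
      have : 2 * (Real.pi:ℂ) * I * (r / N) = (s:ℂ) * (2 * Real.pi * I) := by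
        rw [hs]; push_cast [hN]; field_simp
      rw [this, Complex.exp_int_mul_two_pi_mul_I]
    simp [hz1]
  · have hz1 : z ≠ 1 := by
      intro h
      rw [hz, Complex.exp_eq_one_iff] at h
      obtain ⟨n, hn⟩ := h
      apply hdvd
      have h2πI : (2 * (Real.pi:ℂ) * I) ≠ 0 := by
        simp [Complex.ext_iff, Real.pi_ne_zero, I_ne_zero]
      field_simp at hn
      have hrc : (r:ℂ) = (n * (2^q : ℤ) : ℤ) := by
        push_cast [hN] at hn ⊢
        linear_combination hn
      exact ⟨n, by rw [Int.cast_injective hrc]; ring⟩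
    rw [if_neg hdvd, Fin.sum_univ_eq_sum_range (fun k => z ^ k) N,
      geom_sum_eq hz1, hzN, sub_self, zero_div]

open Complex in
lemma charsum (d q : ℕ) (r : Fin d → ℤ) :
    ∑ j : Fin d → Fin (2^q), Complex.exp (2 * Real.pi * Complex.I *
        (((∑ i, ((j i : ℝ) / 2^q) * (r i : ℝ)) : ℝ) : ℂ)) =
      if (∀ i, (2^q:ℤ) ∣ r i) then (((2^q:ℕ):ℂ))^d else 0 := by
  have hterm : ∀ j : Fin d → Fin (2^q),
      Complex.exp (2 * Real.pi * Complex.I * (((∑ i, ((j i : ℝ) / 2^q) * (r i : ℝ)) : ℝ) : ℂ))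
      = ∏ i, Complex.exp (2 * Real.pi * Complex.I * (((j i : ℕ):ℂ) * (r i : ℂ) / ((2^q : ℕ):ℂ))) := by
    intro j
    rw [← Complex.exp_sum]
    congr 1
    push_cast
    rw [Finset.mul_sum]
    exact Finset.sum_congr rfl (fun i _ => by ring)
  rw [Finset.sum_congr rfl (fun j _ => hterm j)]
  rw [show (Finset.univ : Finset (Fin d → Fin (2^q))) =
    Fintype.piFinset (fun _ => Finset.univ) from (Fintype.piFinset_univ).symm]
  rw [← Finset.prod_univ_sum (fun _ : Fin d => (Finset.univ : Finset (Fin (2^q))))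
    (fun i k => Complex.exp (2 * Real.pi * Complex.I * (((k:ℕ):ℂ) * ((r i):ℂ) / (((2^q:ℕ)):ℂ))))]
  rw [Finset.prod_congr rfl (fun i _ => char1 q (r i))]
  by_cases h : ∀ i, (2^q:ℤ) ∣ r i
  · rw [Finset.prod_congr rfl (fun i _ => if_pos (h i)), if_pos h, Finset.prod_const]
    simp
  · rw [if_neg h]
    push_neg at h
    obtain ⟨i, hi⟩ := h
    exact Finset.prod_eq_zero (Finset.mem_univ i) (by rw [if_neg hi])

lemma norm_char (x : ℝ) : ‖Complex.exp (2 * Real.pi * Complex.I * (x:ℂ))‖ = 1 := by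
  rw [Complex.norm_exp]
  simp [Complex.mul_re]

lemma key_vanish (d q : ℕ) (c : (Fin d → ℤ) → ℂ) (hc : Summable (fun m => ‖c m‖))
    (hzero : ∀ j : Fin d → Fin (2^q), ∑' m : Fin d → ℤ,
      c m * Complex.exp (2 * Real.pi * Complex.I *
        ((∑ i, ((j i : ℝ) / 2^q) * (m i : ℝ) : ℝ) : ℂ)) = 0)
    (n : Fin d → ℤ) : ∑' β : Fin d → ℤ, c (fun i => n i + 2^q * β i) = 0 := by
  classical
  set χ : (Fin d → Fin (2^q)) → (Fin d → ℤ) → ℂ := fun j m =>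
    Complex.exp (2 * Real.pi * Complex.I *
      ((∑ i, ((j i : ℝ) / 2^q) * (m i : ℝ) : ℝ) : ℂ)) with hχ
  have hnormχ : ∀ j m, ‖χ j m‖ = 1 := fun j m => norm_char _
  set w : (Fin d → Fin (2^q)) → ℂ := fun j =>
    Complex.exp (2 * Real.pi * Complex.I *
      ((∑ i, ((j i : ℝ) / 2^q) * ((-(n i) : ℤ) : ℝ) : ℝ) : ℂ)) with hw
  have hnormw : ∀ j, ‖w j‖ = 1 := fun j => norm_char _
  -- product identity
  have hmul : ∀ j m, χ j m * w j = Complex.exp (2 * Real.pi * Complex.I *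
      ((∑ i, ((j i : ℝ) / 2^q) * (((m i - n i : ℤ)) : ℝ) : ℝ) : ℂ)) := by
    intro j m
    rw [hχ, hw, ← Complex.exp_add]
    congr 1
    push_cast
    rw [← mul_add, ← Finset.sum_add_distrib]
    congr 1
    exact Finset.sum_congr rfl (fun i _ => by ring)
  -- summability of each j-family
  have hsumj : ∀ j, Summable (fun m : Fin d → ℤ => c m * χ j m * w j) := by
    intro j
    apply Summable.of_norm
    refine hc.congr fun m => ?_
    rw [norm_mul, norm_mul, hnormχ, hnormw, mul_one, mul_one]
  -- swap finite sum and tsum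
  have hswap0 : ∑ j : Fin d → Fin (2^q), ∑' m : Fin d → ℤ, c m * χ j m * w j = 0 := by
    refine Finset.sum_eq_zero (fun j _ => ?_)
    calc ∑' m : Fin d → ℤ, c m * χ j m * w j
        = (∑' m : Fin d → ℤ, c m * χ j m) * w j := tsum_mul_right
      _ = 0 := by rw [hzero j, zero_mul]
  have hswap : ∑' m : Fin d → ℤ, ∑ j : Fin d → Fin (2^q), c m * χ j m * w j = 0 := by
    rw [Summable.tsum_finsetSum (fun j _ => hsumj j)]
    exact hswap0
  -- evaluate the inner character sum
  have heval : ∀ m : Fin d → ℤ, ∑ j : Fin d → Fin (2^q), c m * χ j m * w j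
      = (if ∀ i, (2^q : ℤ) ∣ (m i - n i) then c m else 0) * ((2^q:ℕ):ℂ)^d := by
    intro m
    rw [Finset.sum_congr rfl (fun j _ => by rw [mul_assoc, hmul j m]), ← Finset.mul_sum,
      charsum d q (fun i => m i - n i)]
    split_ifs with h
    · ring
    · simp
  rw [tsum_congr heval, tsum_mul_right] at hswap
  have hNd : (((2^q:ℕ):ℂ))^d ≠ 0 :=
    pow_ne_zero _ (Nat.cast_ne_zero.mpr (by positivity))
  have hts : ∑' m : Fin d → ℤ, (if ∀ i, (2^q : ℤ) ∣ (m i - n i) then c m else 0) = 0 := by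
    rcases mul_eq_zero.mp hswap with h | h
    · exact h
    · exact absurd h hNd
  -- reindex over the injection β ↦ n + 2^q β
  set ι : (Fin d → ℤ) → (Fin d → ℤ) := fun β => fun i => n i + 2^q * β i with hι
  have hinj : Function.Injective ι := by
    intro a b hab
    funext i
    have := congrFun hab i
    simp only [hι] at this
    have h2 : (2^q : ℤ) ≠ 0 := by positivity
    exact mul_left_cancel₀ h2 (by linarith)
  have hsupp : Function.support (fun m : Fin d → ℤ =>
      (if ∀ i, (2^q : ℤ) ∣ (m i - n i) then c m else 0)) ⊆ Set.range ι := by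
    intro m hm
    simp only [Function.mem_support] at hm
    have hcond : ∀ i, (2^q : ℤ) ∣ (m i - n i) := by
      by_contra h; simp [h] at hm
    choose b hb using hcond
    exact ⟨b, funext fun i => by simp only [hι]; linarith [hb i]⟩
  have := Function.Injective.tsum_eq hinj (f := fun m : Fin d → ℤ =>
      (if ∀ i, (2^q : ℤ) ∣ (m i - n i) then c m else 0)) hsupp
  rw [hts] at this
  have hfin : ∀ β : Fin d → ℤ,
      (if ∀ i, (2^q : ℤ) ∣ (ι β i - n i) then c (ι β) else 0) = c (ι β) :=
    fun β => if_pos (fun i => ⟨β i, by simp [hι]⟩)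
  calc ∑' β : Fin d → ℤ, c (fun i => n i + 2^q * β i)
      = ∑' β : Fin d → ℤ, (if ∀ i, (2^q : ℤ) ∣ (ι β i - n i) then c (ι β) else 0) :=
        tsum_congr (fun β => (hfin β).symm)
    _ = 0 := this

theorem stmt3 (d q : ℕ) (hd : 1 ≤ d) (t : ℝ) (ht : (d:ℝ)/2 < t)
    (uhat vhat : (Fin d → ℤ) → ℂ)
    (hu0 : uhat 0 = 0)
    (hu : Summable (fun m : Fin d → ℤ => enormZ m ^ (2*t) * ‖uhat m‖^2))
    (hmem : FhatMem d q t vhat)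
    (hint : Interpolates d q uhat vhat)
    (hmin : ∀ what : (Fin d → ℤ) → ℂ, FhatMem d q t what →
      Interpolates d q uhat what → HtNorm2 t vhat ≤ HtNorm2 t what) :
    vhat 0 = 0 ∧ ∀ m : Fin d → ℤ, m ≠ 0 →
      vhat m = ((enormZ m ^ (-(2*t)) : ℝ) : ℂ) * Tq q uhat m / ((Mq d q t m : ℝ) : ℂ) := by
  classical
  obtain ⟨hv0, p, hper, hform⟩ := hmem
  have ht2 : (d:ℝ) < 2*t := by linarith
  have hs : Summable (fun m : Fin d → ℤ => enormZ m ^ (-(2*t))) := summable_enormZ_rpow hd ht2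
  -- ℓ¹ summability of uhat
  have hu1 : Summable (fun m : Fin d → ℤ => ‖uhat m‖) := by
    have hg : Summable (fun m : Fin d → ℤ =>
        (enormZ m ^ (-(2*t)) + enormZ m ^ (2*t) * ‖uhat m‖^2)/2) := (hs.add hu).div_const 2
    refine Summable.of_nonneg_of_le (fun m => norm_nonneg _) (fun m => ?_) hg
    by_cases hm0 : m = 0
    · subst hm0
      rw [hu0]
      have h1 : (0:ℝ) ≤ enormZ (0 : Fin d → ℤ) ^ (-(2*t)) := Real.rpow_nonneg (enormZ_nonneg _) _
      have h2 : (0:ℝ) ≤ enormZ (0 : Fin d → ℤ) ^ (2*t) * ‖(0:ℂ)‖^2 :=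
        mul_nonneg (Real.rpow_nonneg (enormZ_nonneg _) _) (sq_nonneg _)
      simp only [norm_zero]
      linarith
    · have he0 := enormZ_pos hm0
      have key := two_mul_le_add_sq (enormZ m ^ (-t)) (enormZ m ^ t * ‖uhat m‖)
      have e1 : enormZ m ^ (-t) * (enormZ m ^ t * ‖uhat m‖) = ‖uhat m‖ := by
        rw [← mul_assoc, ← Real.rpow_add he0]
        simp
      have e2 : (enormZ m ^ (-t))^2 = enormZ m ^ (-(2*t)) := by
        rw [← Real.rpow_natCast (enormZ m ^ (-t)) 2, ← Real.rpow_mul he0.le]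
        norm_num
        ring_nf
      have e3 : (enormZ m ^ t * ‖uhat m‖)^2 = enormZ m ^ (2*t) * ‖uhat m‖^2 := by
        rw [mul_pow, ← Real.rpow_natCast (enormZ m ^ t) 2, ← Real.rpow_mul he0.le]
        ring_nf
      rw [mul_assoc, e1, e2, e3] at key
      linarith
  -- bound on p
  set S : Finset (Fin d → ℤ) :=
    Fintype.piFinset (fun _ : Fin d => Finset.Icc (0:ℤ) (2^q - 1)) with hS
  set C : ℝ := ∑ r ∈ S, ‖p r‖ with hC
  have hNpos : (0:ℤ) < 2^q := by positivity
  have hpb : ∀ m', ‖p m'‖ ≤ C := by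
    intro m'
    have hrS : (fun i => m' i % 2^q) ∈ S := by
      rw [hS, Fintype.mem_piFinset]
      intro i
      rw [Finset.mem_Icc]
      constructor
      · exact Int.emod_nonneg _ hNpos.ne'
      · linarith [Int.emod_lt_of_pos (m' i) hNpos]
    have heq : p m' = p (fun i => m' i % 2^q) := by
      have h := hper (fun i => m' i % 2^q) (fun i => m' i / 2^q)
      rw [← h]
      congr 1
      funext i
      exact (Int.emod_add_mul_ediv (m' i) (2^q)).symm
    rw [heq, hC]
    exact Finset.single_le_sum (fun r _ => norm_nonneg (p r)) hrS
  have hC0 : 0 ≤ C := Finset.sum_nonneg fun _ _ => norm_nonneg _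
  -- ℓ¹ summability of vhat
  have hv1 : Summable (fun m : Fin d → ℤ => ‖vhat m‖) := by
    refine Summable.of_nonneg_of_le (fun m => norm_nonneg _) (fun m' => ?_) (hs.mul_right C)
    by_cases hm0 : m' = 0
    · subst hm0
      rw [hv0]
      simp only [norm_zero]
      exact mul_nonneg (Real.rpow_nonneg (enormZ_nonneg _) _) hC0
    · rw [hform m' hm0, norm_mul, Complex.norm_real,
        Real.norm_of_nonneg (Real.rpow_nonneg (enormZ_nonneg _) _)]
      exact mul_le_mul_of_nonneg_left (hpb m') (Real.rpow_nonneg (enormZ_nonneg _) _)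
  have hcl1 : Summable (fun m : Fin d → ℤ => ‖uhat m - vhat m‖) :=
    Summable.of_nonneg_of_le (fun m => norm_nonneg _) (fun m => norm_sub_le _ _) (hu1.add hv1)
  -- injectivity of the reindexing maps
  have hι : ∀ mm : Fin d → ℤ,
      Function.Injective (fun β : Fin d → ℤ => (fun i => mm i + 2^q * β i : Fin d → ℤ)) := by
    intro mm a b hab
    funext i
    have h := congrFun hab i
    simp only at h
    have h2 : (2^q : ℤ) ≠ 0 := hNpos.ne'
    exact mul_left_cancel₀ h2 (by linarith)
  have hkey : ∀ n : Fin d → ℤ, ∑' β : Fin d → ℤ,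
      (uhat (fun i => n i + 2^q * β i) - vhat (fun i => n i + 2^q * β i)) = 0 :=
    fun n => key_vanish d q (fun m => uhat m - vhat m) hcl1 hint n
  refine ⟨hv0, fun m hm => ?_⟩
  have husum : Summable (fun β : Fin d → ℤ => uhat (fun i => m i + 2^q * β i)) :=
    ((Summable.of_norm hu1).comp_injective (hι m)).congr fun _ => rfl
  have hvsum : Summable (fun β : Fin d → ℤ => vhat (fun i => m i + 2^q * β i)) :=
    ((Summable.of_norm hv1).comp_injective (hι m)).congr fun _ => rfl
  have hTeq : Tq q uhat m = Tq q vhat m := by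
    have h0 := hkey m
    rw [Summable.tsum_sub husum hvsum] at h0
    have := sub_eq_zero.mp h0
    unfold Tq
    exact this
  have hvform : ∀ β : Fin d → ℤ, vhat (fun i => m i + 2^q * β i) =
      ((enormZ (fun i => m i + 2^q * β i) ^ (-(2*t)) : ℝ) : ℂ) * p m := by
    intro β
    by_cases h0 : (fun i => m i + 2^q * β i) = (0 : Fin d → ℤ)
    · rw [h0, hv0, enormZ_zero, Real.zero_rpow (by intro h; have hd1 : (1:ℝ) ≤ d := (by exact_mod_cast hd); linarith)]
      simp
    · rw [hform _ h0, hper m β]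
  have hMq_sum : Summable (fun β : Fin d → ℤ =>
      enormZ (fun i => m i + 2^q * β i) ^ (-(2*t))) :=
    (hs.comp_injective (hι m)).congr fun _ => rfl
  have hTv : Tq q vhat m = ((Mq d q t m : ℝ) : ℂ) * p m := by
    unfold Tq Mq
    rw [tsum_congr hvform, tsum_mul_right, ← Complex.ofReal_tsum]
  have hMpos : 0 < Mq d q t m := by
    unfold Mq
    refine Summable.tsum_pos hMq_sum (fun β => Real.rpow_nonneg (enormZ_nonneg _) _) 0 ?_
    have h0 : (fun i => m i + 2^q * (0 : Fin d → ℤ) i) = m := by funext i; simp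
    rw [h0]
    exact Real.rpow_pos_of_pos (enormZ_pos hm) _
  have hMne : ((Mq d q t m : ℝ) : ℂ) ≠ 0 := by
    simpa using hMpos.ne'
  have hp : p m = Tq q uhat m / ((Mq d q t m : ℝ) : ℂ) := by
    rw [hTeq, hTv]
    field_simp
  rw [hform m hm, hp]
  ring
end

section
/- The limit lim_{q→∞} (1/q) Σ_{m ∈ B_q^d \ {0}} |m|^{-d} exists, is finite and positive, and equals ∫_{[-1,1]^d \ [-1/2,1/2]^d} |x|^{-d} dx, where B_q^d = [-2^{q-1}, 2^{q-1}-1]^d ⊂ ℤ^d. -/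
/-!
Split the partial sums `S q = ∑_{m ∈ B_q \ {0}} |m|^{-d}` into increments: `S (k+2) - S (k+1)` is
the sum of `|m|^{-d}` over `B_{k+2} \ B_{k+1}`. Grouping `ℝ^d` into dyadic cells of side
`2^{-(k+1)}`, this set of indices is exactly the set of cells tiling the half-open shell
`[-1,1)^d \ [-1/2,1/2)^d`, and by `(-d)`-homogeneity of `|x|^{-d}` the increment is the integral
over the shell of `|·|^{-d}` evaluated at the lower corner of the cell containing `x`. On the shell
`|x| ≥ 1/2`, so these integrands are bounded by `2^d`; dominated convergence shows that the
increments tend to the integral, and Cesàro averaging gives the limit of `S q / q`.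
-/

open scoped BigOperators

open Filter

/-- Euclidean norm on `ℝ^d`. -/
noncomputable def enormR {d : ℕ} (y : Fin d → ℝ) : ℝ :=
  Real.sqrt (∑ i, (y i)^2)

open MeasureTheory Set Topology

theorem tendsto_one_div_mul_of_tendsto_sub {u : ℕ → ℝ} {l : ℝ}
    (h : Tendsto (fun n => u (n + 1) - u n) atTop (𝓝 l)) :
    Tendsto (fun n : ℕ => (1 / (n : ℝ)) * u n) atTop (𝓝 l) := by
  have hu0 : Tendsto (fun n : ℕ => (1 / (n : ℝ)) * u 0) atTop (𝓝 0) := by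
    simpa using tendsto_one_div_atTop_nhds_zero_nat.mul_const (u 0)
  refine (by simpa using h.cesaro.add hu0 : Tendsto _ _ (𝓝 l)).congr fun n => ?_
  rw [← Finset.sum_sub_distrib, Finset.sum_range_sub (fun j => u j), one_div]
  ring

theorem setIntegral_comp_preimage_eq_sum {α ι : Type*} [MeasurableSpace α] [MeasurableSpace ι]
    [MeasurableSingletonClass ι] {μ : Measure α} {φ : α → ι} (hφ : Measurable φ)
    (F : Finset ι) (hF : ∀ m ∈ F, μ (φ ⁻¹' {m}) ≠ ⊤) (g : ι → ℝ) :
    ∫ x in φ ⁻¹' F, g (φ x) ∂μ = ∑ m ∈ F, μ.real (φ ⁻¹' {m}) * g m := by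
  have hconst : ∀ m, EqOn (fun x => g (φ x)) (fun _ => g m) (φ ⁻¹' {m}) :=
    fun m x hx => congrArg g hx
  have hcell : ∀ m ∈ F, ∫ x in φ ⁻¹' {m}, g (φ x) ∂μ = μ.real (φ ⁻¹' {m}) * g m := fun m _ => by
    rw [setIntegral_congr_fun (hφ (measurableSet_singleton m)) (hconst m), setIntegral_const,
      smul_eq_mul]
  rw [← Finset.sum_congr rfl hcell, ← integral_biUnion_finset]
  · congr 1; ext x; simp
  · exact fun m _ => hφ (measurableSet_singleton m)
  · exact fun m _ m' _ hne => (disjoint_singleton.2 hne).preimage φ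
  · exact fun m hm => (integrableOn_const (hF m hm)).congr_fun (hconst m).symm
      (hφ (measurableSet_singleton m))

theorem mem_Ico_div_iff_floor_mem_Ico {N : ℝ} (hN : 0 < N) (a b : ℤ) (x : ℝ) :
    x ∈ Ico (a / N) (b / N) ↔ ⌊N * x⌋ ∈ Ico a b := by
  rw [mem_Ico, mem_Ico, div_le_iff₀' hN, lt_div_iff₀' hN, Int.le_floor, Int.floor_lt]

section Dyadic

variable {ι : Type*}

noncomputable def dyadicIndex (j : ℕ) (x : ι → ℝ) : ι → ℤ := fun i => ⌊2 ^ j * x i⌋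

noncomputable def dyadicRound (j : ℕ) (x : ι → ℝ) : ι → ℝ :=
  fun i => (dyadicIndex j x i : ℝ) / 2 ^ j

theorem measurable_dyadicIndex (j : ℕ) : Measurable (dyadicIndex (ι := ι) j) :=
  measurable_pi_lambda _ fun i => (measurable_const.mul (measurable_pi_apply i)).floor

theorem measurable_dyadicRound (j : ℕ) : Measurable (dyadicRound (ι := ι) j) :=
  measurable_pi_lambda _ fun i =>
    (measurable_from_top.comp ((measurable_pi_apply i).comp (measurable_dyadicIndex j))).div_const _

theorem preimage_dyadicIndex_singleton (j : ℕ) (m : ι → ℤ) :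
    dyadicIndex j ⁻¹' {m} = univ.pi fun i => Ico ((m i : ℝ) / 2 ^ j) ((m i + 1 : ℤ) / 2 ^ j) := by
  ext x
  simp only [mem_preimage, mem_singleton_iff, mem_univ_pi,
    mem_Ico_div_iff_floor_mem_Ico (by positivity : (0 : ℝ) < 2 ^ j), funext_iff, dyadicIndex]
  refine forall_congr' fun i => ?_
  rw [Int.floor_eq_iff, mem_Ico, Int.le_floor, Int.floor_lt]
  push_cast; rfl

theorem volume_preimage_dyadicIndex_singleton [Fintype ι] (j : ℕ) (m : ι → ℤ) :
    volume (dyadicIndex j ⁻¹' {m}) = ENNReal.ofReal ((2 ^ j)⁻¹) ^ Fintype.card ι := by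
  have hside : ∀ i, ((m i + 1 : ℤ) : ℝ) / 2 ^ j - (m i : ℝ) / 2 ^ j = (2 ^ j)⁻¹ := fun i => by
    push_cast; ring
  simp only [preimage_dyadicIndex_singleton, Real.volume_pi_Ico, hside, Finset.prod_const,
    Finset.card_univ]

theorem dyadicIndex_dyadicRound (j : ℕ) (x : ι → ℝ) :
    dyadicIndex j (dyadicRound j x) = dyadicIndex j x := by
  ext i
  simp [dyadicIndex, dyadicRound, mul_div_cancel₀]

theorem dyadicRound_apply_le (j : ℕ) (x : ι → ℝ) (i : ι) : dyadicRound j x i ≤ x i := by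
  rw [dyadicRound, div_le_iff₀ (by positivity), mul_comm]
  exact Int.floor_le _

theorem sub_lt_dyadicRound_apply (j : ℕ) (x : ι → ℝ) (i : ι) :
    x i - (2 ^ j)⁻¹ < dyadicRound j x i := by
  have h2 : (0 : ℝ) < 2 ^ j := by positivity
  simp only [dyadicRound, dyadicIndex]
  rw [lt_div_iff₀ h2, sub_mul, inv_mul_cancel₀ h2.ne', mul_comm]
  linarith [Int.lt_floor_add_one (2 ^ j * x i)]

theorem tendsto_dyadicRound (x : ι → ℝ) :
    Tendsto (fun j => dyadicRound j x) atTop (𝓝 x) := by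
  refine tendsto_pi_nhds.2 fun i => ?_
  have hlow : Tendsto (fun j : ℕ => x i - (2 ^ j)⁻¹) atTop (𝓝 (x i)) := by
    simpa using tendsto_const_nhds.sub
      (tendsto_inv_atTop_zero.comp (tendsto_pow_atTop_atTop_of_one_lt (one_lt_two (α := ℝ))))
  exact tendsto_of_tendsto_of_tendsto_of_le_of_le hlow tendsto_const_nhds
    (fun j => (sub_lt_dyadicRound_apply j x i).le) (fun j => dyadicRound_apply_le j x i)

end Dyadic

section Euclidean

variable {d : ℕ}

theorem enormR_nonneg (x : Fin d → ℝ) : 0 ≤ enormR x := Real.sqrt_nonneg _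

theorem continuous_enormR : Continuous (enormR (d := d)) := by
  unfold enormR; fun_prop

theorem abs_le_enormR (x : Fin d → ℝ) (i : Fin d) : |x i| ≤ enormR x := by
  rw [← Real.sqrt_sq_eq_abs]
  exact Real.sqrt_le_sqrt (Finset.single_le_sum (f := fun i => x i ^ 2)
    (fun i _ => sq_nonneg _) (Finset.mem_univ i))

theorem enormR_div (y : Fin d → ℝ) {c : ℝ} (hc : 0 < c) :
    enormR (fun i => y i / c) = enormR y / c := by
  simp only [enormR, div_pow, ← Finset.sum_div]
  rw [Real.sqrt_div' _ (sq_nonneg c), Real.sqrt_sq hc.le]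

theorem enormR_div_rpow_neg (y : Fin d → ℝ) {c : ℝ} (hc : 0 < c) :
    enormR (fun i => y i / c) ^ (-(d : ℝ)) = c ^ d * enormR y ^ (-(d : ℝ)) := by
  rw [enormR_div y hc, Real.div_rpow (enormR_nonneg y) hc.le, Real.rpow_neg hc.le,
    Real.rpow_natCast, div_inv_eq_mul, mul_comm]

theorem sum_enormZ_rpow_eq_setIntegral (F : Finset (Fin d → ℤ)) (j : ℕ) :
    ∑ m ∈ F, enormZ m ^ (-(d : ℝ)) =
      ∫ x in dyadicIndex j ⁻¹' (F : Set (Fin d → ℤ)), enormR (dyadicRound j x) ^ (-(d : ℝ)) := by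
  have h2 : (0 : ℝ) < 2 ^ j := by positivity
  calc ∑ m ∈ F, enormZ m ^ (-(d : ℝ))
      = ∑ m ∈ F, volume.real (dyadicIndex j ⁻¹' {m}) *
          enormR (fun i => (m i : ℝ) / 2 ^ j) ^ (-(d : ℝ)) := Finset.sum_congr rfl fun m _ => by
        rw [measureReal_def, volume_preimage_dyadicIndex_singleton, enormR_div_rpow_neg _ h2,
          ← mul_assoc, ENNReal.toReal_pow, ENNReal.toReal_ofReal (by positivity),
          Fintype.card_fin, ← mul_pow, inv_mul_cancel₀ h2.ne', one_pow, one_mul]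
        rfl
    _ = _ := (setIntegral_comp_preimage_eq_sum (measurable_dyadicIndex j) F
        (fun m _ => by simp [volume_preimage_dyadicIndex_singleton])
        fun m => enormR (fun i => (m i : ℝ) / 2 ^ j) ^ (-(d : ℝ))).symm

end Euclidean

theorem preimage_dyadicIndex_Bqset {d : ℕ} (j q : ℕ) :
    dyadicIndex j ⁻¹' (Bqset d q : Set (Fin d → ℤ)) =
      univ.pi fun _ => Ico (-(2 : ℝ) ^ (q - 1) / 2 ^ j) (2 ^ (q - 1) / 2 ^ j) := by
  ext x
  simp only [Bqset, mem_preimage, Finset.mem_coe, Fintype.mem_piFinset, Finset.mem_Icc,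
    mem_univ_pi, Int.le_sub_one_iff]
  refine forall_congr' fun i => ?_
  have h := mem_Ico_div_iff_floor_mem_Ico (by positivity : (0 : ℝ) < 2 ^ j)
    (-(2 : ℤ) ^ (q - 1)) (2 ^ (q - 1)) (x i)
  push_cast at h
  rw [h, mem_Ico]; rfl

theorem Bqset_subset_succ (d q : ℕ) : Bqset d q ⊆ Bqset d (q + 1) :=
  Fintype.piFinset_subset _ _ fun _ => Finset.Icc_subset_Icc
    (neg_le_neg (pow_le_pow_right₀ one_le_two (Nat.sub_le_sub_right q.le_succ 1)))
    (sub_le_sub_right (pow_le_pow_right₀ one_le_two (Nat.sub_le_sub_right q.le_succ 1)) 1)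

theorem zero_mem_Bqset (d q : ℕ) : (0 : Fin d → ℤ) ∈ Bqset d q := by
  have : (0 : ℤ) < 2 ^ (q - 1) := by positivity
  simp only [Bqset, Fintype.mem_piFinset, Pi.zero_apply, Finset.mem_Icc]
  exact fun _ => ⟨by omega, by omega⟩

theorem sum_erase_Bqset_succ_sub (d q : ℕ) (g : (Fin d → ℤ) → ℝ) :
    ∑ m ∈ (Bqset d (q + 1)).erase 0, g m - ∑ m ∈ (Bqset d q).erase 0, g m =
      ∑ m ∈ Bqset d (q + 1) \ Bqset d q, g m := by
  rw [Finset.sum_erase_eq_sub (zero_mem_Bqset d _), Finset.sum_erase_eq_sub (zero_mem_Bqset d _),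
    Finset.sum_sdiff_eq_sub (Bqset_subset_succ d q)]
  ring

section Shell

variable {d : ℕ}

def shell (d : ℕ) : Set (Fin d → ℝ) :=
  (univ.pi fun _ => Ico (-1 : ℝ) 1) \ univ.pi fun _ => Ico (-(1 : ℝ) / 2) (1 / 2)

theorem preimage_dyadicIndex_Bqset_sdiff (k : ℕ) :
    dyadicIndex (k + 1) ⁻¹' (↑(Bqset d (k + 2) \ Bqset d (k + 1)) : Set (Fin d → ℤ)) =
      shell d := by
  have h1 : (2 : ℝ) ^ (k + 2 - 1) / 2 ^ (k + 1) = 1 := by simp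
  have h2 : (2 : ℝ) ^ (k + 1 - 1) / 2 ^ (k + 1) = 1 / 2 := by
    rw [Nat.add_sub_cancel, pow_succ]; field_simp
  rw [Finset.coe_sdiff, preimage_sdiff, preimage_dyadicIndex_Bqset, preimage_dyadicIndex_Bqset,
    neg_div, neg_div, h1, h2, shell, neg_div]

theorem dyadicRound_mem_shell {x : Fin d → ℝ} (hx : x ∈ shell d) (k : ℕ) :
    dyadicRound (k + 1) x ∈ shell d := by
  rw [← preimage_dyadicIndex_Bqset_sdiff k] at hx ⊢
  rwa [mem_preimage, dyadicIndex_dyadicRound]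

theorem measurableSet_shell : MeasurableSet (shell d) :=
  (MeasurableSet.univ_pi fun _ => measurableSet_Ico).diff
    (MeasurableSet.univ_pi fun _ => measurableSet_Ico)

theorem volume_shell_lt_top : volume (shell d) < ⊤ :=
  (measure_mono sdiff_subset).trans_lt (by simp [Real.volume_pi_Ico])

theorem half_le_enormR_of_mem_shell {x : Fin d → ℝ} (hx : x ∈ shell d) : 1 / 2 ≤ enormR x := by
  obtain ⟨i, -, hi⟩ := not_forall₂.1 hx.2
  refine le_trans ?_ (abs_le_enormR x i)
  rw [mem_Ico, not_and_or, not_le, not_lt] at hi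
  rcases hi with hi | hi
  · exact le_abs.2 (Or.inr (by linarith))
  · exact le_abs.2 (Or.inl hi)

theorem enormR_rpow_le_of_mem_shell {x : Fin d → ℝ} (hx : x ∈ shell d) :
    enormR x ^ (-(d : ℝ)) ≤ 2 ^ d := by
  calc enormR x ^ (-(d : ℝ)) ≤ (1 / 2) ^ (-(d : ℝ)) :=
        Real.rpow_le_rpow_of_nonpos (by norm_num) (half_le_enormR_of_mem_shell hx) (by simp)
    _ = 2 ^ d := by rw [Real.rpow_neg (by norm_num), Real.rpow_natCast]; simp

theorem integrableOn_enormR_rpow_shell :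
    IntegrableOn (fun x => enormR x ^ (-(d : ℝ))) (shell d) :=
  Measure.integrableOn_of_bounded (M := 2 ^ d) volume_shell_lt_top.ne
    (continuous_enormR.measurable.pow_const _).aestronglyMeasurable
    ((ae_restrict_iff' measurableSet_shell).2 (ae_of_all _ fun x hx => by
      rw [Real.norm_of_nonneg (Real.rpow_nonneg (enormR_nonneg _) _)]
      exact enormR_rpow_le_of_mem_shell hx))

theorem tendsto_setIntegral_dyadicRound_shell :
    Tendsto (fun k => ∫ x in shell d, enormR (dyadicRound (k + 1) x) ^ (-(d : ℝ))) atTop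
      (𝓝 (∫ x in shell d, enormR x ^ (-(d : ℝ)))) := by
  refine tendsto_integral_of_dominated_convergence (fun _ => 2 ^ d)
    (fun k => ((continuous_enormR.measurable.pow_const _).comp
      (measurable_dyadicRound (k + 1))).aestronglyMeasurable)
    (integrableOn_const volume_shell_lt_top.ne) (fun k => ?_) ?_
  all_goals refine (ae_restrict_iff' measurableSet_shell).2 (ae_of_all _ fun x hx => ?_)
  · rw [Real.norm_of_nonneg (Real.rpow_nonneg (enormR_nonneg _) _)]
    exact enormR_rpow_le_of_mem_shell (dyadicRound_mem_shell hx k)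
  · have hpos : 0 < enormR x := one_half_pos.trans_le (half_le_enormR_of_mem_shell hx)
    exact ((continuous_enormR.continuousAt.rpow_const (Or.inl hpos.ne')).tendsto).comp
      ((tendsto_dyadicRound x).comp (tendsto_add_atTop_nat 1))

theorem setIntegral_enormR_rpow_shell_pos (hd : 1 ≤ d) :
    0 < ∫ x in shell d, enormR x ^ (-(d : ℝ)) := by
  have hcorner : (univ.pi fun _ => Ico (1 / 2 : ℝ) 1) ⊆ shell d := fun x hx => by
    refine ⟨fun i _ => ?_, fun hx' => ?_⟩
    · have := hx i trivial; exact ⟨by linarith [this.1], this.2⟩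
    · linarith [(hx ⟨0, hd⟩ trivial).1, (hx' ⟨0, hd⟩ trivial).2]
  rw [setIntegral_pos_iff_support_of_nonneg_ae
    (ae_of_all _ fun x => Real.rpow_nonneg (enormR_nonneg _) _) integrableOn_enormR_rpow_shell]
  refine lt_of_lt_of_le ?_ (measure_mono (subset_inter (fun x hx => ?_) hcorner))
  · simp only [Real.volume_pi_Ico, Finset.prod_const]
    exact ENNReal.pow_pos (by norm_num) _
  · exact (Real.rpow_pos_of_pos
      (one_half_pos.trans_le (half_le_enormR_of_mem_shell (hcorner hx))) _).ne'

end Shell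

theorem tendsto_sum_Bqset_sdiff (d : ℕ) :
    Tendsto (fun k => ∑ m ∈ Bqset d (k + 2) \ Bqset d (k + 1), enormZ m ^ (-(d : ℝ))) atTop
      (𝓝 (∫ x in shell d, enormR x ^ (-(d : ℝ)))) := by
  refine tendsto_setIntegral_dyadicRound_shell.congr fun k => ?_
  rw [sum_enormZ_rpow_eq_setIntegral _ (k + 1), preimage_dyadicIndex_Bqset_sdiff]

theorem stmt7 (d : ℕ) (hd : 1 ≤ d) :
    0 < ∫ x in (Set.univ.pi (fun _ : Fin d => Set.Icc (-(1:ℝ)) 1)) \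
          (Set.univ.pi (fun _ : Fin d => Set.Icc (-(1:ℝ)/2) (1/2))),
        enormR x ^ (-(d:ℝ)) ∧
    Tendsto
      (fun q : ℕ =>
        (1/(q:ℝ)) * ∑ m ∈ (Bqset d q).erase 0, enormZ m ^ (-(d:ℝ)))
      atTop
      (nhds (∫ x in (Set.univ.pi (fun _ : Fin d => Set.Icc (-(1:ℝ)) 1)) \
          (Set.univ.pi (fun _ : Fin d => Set.Icc (-(1:ℝ)/2) (1/2))),
        enormR x ^ (-(d:ℝ)))) := by
  have hshell : ((univ.pi fun _ : Fin d => Icc (-(1 : ℝ)) 1) \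
      univ.pi fun _ => Icc (-(1 : ℝ) / 2) (1 / 2) : Set (Fin d → ℝ)) =ᵐ[volume] shell d :=
    (Measure.pi_Ico_ae_eq_pi_Icc.diff Measure.pi_Ico_ae_eq_pi_Icc).symm
  rw [setIntegral_congr_set hshell]
  refine ⟨setIntegral_enormR_rpow_shell_pos hd, tendsto_one_div_mul_of_tendsto_sub ?_⟩
  rw [← tendsto_add_atTop_iff_nat 1]
  simpa only [sum_erase_Bqset_succ_sub] using tendsto_sum_Bqset_sdiff d
end
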